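/- arXiv:1404.2730 — 2 statements merged into one kernel-verified Lean document; each statement's English description precedes it below -/
import Mathlib

section
/- Let r ≥ 1, let f be a homogeneous polynomial of degree r+1 on ℝ^N × ℝ^N, and let F = f^⊕ be the cyclically symmetric Hamiltonian generated by f. Then ‖X_F‖_op ≤ |X_F|_1, and this holds both when the operator norm is taken with respect to the Euclidean (ℓ²) norm and when it is taken with respect to the supremum (ℓ^∞) norm on ℝ^{2N}. -/
/-!
By cyclic symmetry of `F = f^⊕`, the components of `X_F` are `X_F(z)_j = X_1(τ^j z)` and
`X_F(z)_{N+j} = X_{N+1}(τ^j z)`, so it suffices to bound the orbit vector `(g(τ^j z))_j` for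
`g = X_1, X_{N+1}`, homogeneous of degree `r`. In the sup norm each entry is bounded monomial by
monomial. In `ℓ²`, by the triangle inequality it suffices to treat a single monomial `z^d` with
`|d| = r ≥ 1`: choosing a variable `z_k` occurring in it, `|(τ^j z)^d| ≤ |z_{k+j}| ‖z‖^{r-1}`,
and since `j ↦ k + j` is injective the squares of these bounds sum to at most `‖z‖^{2r}`.
-/

open MvPolynomial Finset Real

/-- index set for the `2N` variables: `inl j` ↦ `x_j`, `inr j` ↦ `y_j` (indices mod `N`). -/
abbrev Idx (N : ℕ) := Fin N ⊕ Fin N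

open Fin.CommRing in
/-- the cyclic shift `τ^s` (`s ∈ ℤ`) acting on polynomials: `τ^s X_j = X_{j+s}`
(indices mod `N`), separately on the `x` and `y` variables, so that
`(τ^s f)(x,y) = f(τ^s x, τ^s y)`. -/
noncomputable def tauPow (N : ℕ) [NeZero N] (s : ℤ) (f : MvPolynomial (Idx N) ℝ) :
    MvPolynomial (Idx N) ℝ :=
  rename (Sum.map (· + (s : Fin N)) (· + (s : Fin N))) f

/-- `f ↦ f^⊕ := ∑_{l=1}^N τ^l f`. -/
noncomputable def oplus (N : ℕ) [NeZero N] (f : MvPolynomial (Idx N) ℝ) :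
    MvPolynomial (Idx N) ℝ :=
  ∑ l ∈ Finset.range N, tauPow N ((l : ℤ) + 1) f

/-- the polynomial norm `‖f‖_R`; for a homogeneous polynomial of degree `s` it equals
`R^s ∑_{|j|+|k|=s} |f_{j,k}|`. -/
noncomputable def pnorm {N : ℕ} (R : ℝ) (f : MvPolynomial (Idx N) ℝ) : ℝ :=
  ∑ d ∈ f.support, |f.coeff d| * R ^ (d.sum fun _ e => e)

/-- the Poisson bracket `{f,g} = ∑_j (∂f/∂x_j ∂g/∂y_j − ∂f/∂y_j ∂g/∂x_j)`. -/
noncomputable def poisson (N : ℕ) (f g : MvPolynomial (Idx N) ℝ) : MvPolynomial (Idx N) ℝ :=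
  ∑ j : Fin N,
    (pderiv (Sum.inl j) f * pderiv (Sum.inr j) g - pderiv (Sum.inr j) f * pderiv (Sum.inl j) g)

/-- the norm `|X_F|_R := ‖X_1‖_R + ‖X_{N+1}‖_R` of the Hamiltonian vector field
`X_F = J∇F` (here `X_1 = ∂F/∂y_1` and `X_{N+1} = −∂F/∂x_1`). -/
noncomputable def hamNorm (N : ℕ) [NeZero N] (R : ℝ) (F : MvPolynomial (Idx N) ℝ) : ℝ :=
  pnorm R (pderiv (Sum.inr 0) F) + pnorm R (-pderiv (Sum.inl 0) F)

/-- the Hamiltonian vector field `X_F = J∇F` as a map on the phase space `ℝ^{2N}`: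
`ẋ_j = ∂F/∂y_j`, `ẏ_j = −∂F/∂x_j`. -/
noncomputable def Xvec (N : ℕ) (F : MvPolynomial (Idx N) ℝ) (z : Idx N → ℝ) : Idx N → ℝ :=
  Sum.elim (fun j => eval z (pderiv (Sum.inr j) F)) (fun j => -eval z (pderiv (Sum.inl j) F))

/-- the euclidean (`ℓ²`) norm on `ℝ^{2N}`; the supremum (`ℓ^∞`) norm is the `Pi` norm `‖·‖`. -/
noncomputable def enorm {N : ℕ} (z : Idx N → ℝ) : ℝ :=
  Real.sqrt (∑ l, z l ^ 2)

namespace Idx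

variable {N : ℕ}

def shift (t : Fin N) : Idx N → Idx N := Sum.map (· + t) (· + t)

theorem shift_injective (t : Fin N) : Function.Injective (shift t) :=
  (add_left_injective t).sumMap (add_left_injective t)

theorem shift_comp_shift (s t : Fin N) : shift s ∘ shift t = shift (t + s) := by
  funext i
  cases i <;> simp [shift, add_assoc]

theorem injective_shift_apply (i : Idx N) : Function.Injective fun t : Fin N => shift t i := by
  cases i <;> intro s t h <;> simpa [shift] using h

end Idx

open Idx

variable {N : ℕ}

theorem oplus_eq_sum_rename_shift [NeZero N] (f : MvPolynomial (Idx N) ℝ) :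
    oplus N f = ∑ t : Fin N, rename (shift t) f := by
  rw [oplus, ← Fin.sum_univ_eq_sum_range (fun l => tauPow N ((l : ℤ) + 1) f) N,
    ← Equiv.sum_comp (Equiv.addRight (1 : Fin N)) fun t => rename (shift t) f]
  simp [tauPow, shift]

theorem rename_shift_oplus [NeZero N] (f : MvPolynomial (Idx N) ℝ) (s : Fin N) :
    rename (shift s) (oplus N f) = oplus N f := by
  simp only [oplus_eq_sum_rename_shift, map_sum, rename_rename, shift_comp_shift]
  exact Equiv.sum_comp (Equiv.addRight s) fun t => rename (shift t) f

theorem MvPolynomial.IsHomogeneous.oplus [NeZero N] {f : MvPolynomial (Idx N) ℝ} {n : ℕ}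
    (hf : f.IsHomogeneous n) : (oplus N f).IsHomogeneous n := by
  rw [oplus_eq_sum_rename_shift]
  exact IsHomogeneous.sum _ _ _ fun t _ => hf.rename_isHomogeneous

theorem pderiv_shift_of_forall_rename_eq {F : MvPolynomial (Idx N) ℝ}
    (hF : ∀ t, rename (shift t) F = F) (t : Fin N) (i : Idx N) :
    pderiv (shift t i) F = rename (shift t) (pderiv i F) := by
  conv_lhs => rw [← hF t]
  exact pderiv_rename (shift_injective t) i F

noncomputable def orbitEval (g : MvPolynomial (Idx N) ℝ) (z : Idx N → ℝ) : Fin N → ℝ :=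
  fun t => eval (z ∘ shift t) g

theorem Xvec_eq_sumElim_orbitEval [NeZero N] {F : MvPolynomial (Idx N) ℝ}
    (hF : ∀ t, rename (shift t) F = F) (z : Idx N → ℝ) :
    Xvec N F z =
      Sum.elim (orbitEval (pderiv (.inr 0) F) z) (orbitEval (-pderiv (.inl 0) F) z) := by
  have hinl (t : Fin N) : shift t (.inl 0) = .inl t := by simp [shift]
  have hinr (t : Fin N) : shift t (.inr 0) = .inr t := by simp [shift]
  funext i
  rcases i with t | t
  · simp [Xvec, orbitEval, ← hinr t, pderiv_shift_of_forall_rename_eq hF, eval_rename]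
  · simp [Xvec, orbitEval, ← hinl t, pderiv_shift_of_forall_rename_eq hF, eval_rename]

theorem Finset.prod_pow_le_pow_sum {ι R : Type*} [CommSemiring R] [PartialOrder R]
    [IsOrderedRing R] (s : Finset ι) {a : ι → R} {M : R} (e : ι → ℕ)
    (h0 : ∀ i ∈ s, 0 ≤ a i) (hM : ∀ i ∈ s, a i ≤ M) :
    ∏ i ∈ s, a i ^ e i ≤ M ^ ∑ i ∈ s, e i := by
  rw [← Finset.prod_pow_eq_pow_sum]
  exact Finset.prod_le_prod (fun i hi => pow_nonneg (h0 i hi) _)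
    fun i hi => pow_le_pow_left₀ (h0 i hi) (hM i hi) _

theorem Finset.prod_pow_le_mul_pow_pred {ι R : Type*} [Fintype ι] [DecidableEq ι]
    [CommSemiring R] [PartialOrder R] [IsOrderedRing R] {a : ι → R} {M : R} (e : ι → ℕ)
    (h0 : ∀ i, 0 ≤ a i) (hM : ∀ i, a i ≤ M) {k : ι} (hk : e k ≠ 0) :
    ∏ i, a i ^ e i ≤ a k * M ^ (∑ i, e i - 1) := by
  obtain ⟨m, hm⟩ := Nat.exists_eq_succ_of_ne_zero hk
  rw [← Finset.mul_prod_erase univ _ (mem_univ k), ← Finset.add_sum_erase univ _ (mem_univ k),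
    hm, Nat.succ_add_sub_one, pow_add, pow_succ', mul_assoc]
  refine mul_le_mul_of_nonneg_left (mul_le_mul (pow_le_pow_left₀ (h0 k) (hM k) m) ?_
    (prod_nonneg fun i _ => pow_nonneg (h0 i) _) (pow_nonneg ((h0 k).trans (hM k)) m)) (h0 k)
  exact Finset.prod_pow_le_pow_sum _ e (fun i _ => h0 i) fun i _ => hM i

theorem MvPolynomial.IsHomogeneous.sum_apply_eq {σ R : Type*} [Fintype σ] [CommSemiring R]
    {g : MvPolynomial σ R} {m : ℕ} (hg : g.IsHomogeneous m) {d : σ →₀ ℕ} (hd : d ∈ g.support) :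
    ∑ i, d i = m := by
  rw [← Finsupp.degree_eq_sum, Finsupp.degree_eq_weight_one]
  exact hg (mem_support_iff.mp hd)

theorem pnorm_one (g : MvPolynomial (Idx N) ℝ) : pnorm 1 g = ∑ d ∈ g.support, |g.coeff d| := by
  simp [pnorm]

theorem pnorm_one_nonneg (g : MvPolynomial (Idx N) ℝ) : 0 ≤ pnorm 1 g := by
  rw [pnorm_one]
  exact sum_nonneg fun d _ => abs_nonneg _

theorem abs_eval_le_pnorm_one_mul_pow {g : MvPolynomial (Idx N) ℝ} {m : ℕ}
    (hg : g.IsHomogeneous m) {w : Idx N → ℝ} {M : ℝ} (hw : ∀ i, |w i| ≤ M) :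
    |eval w g| ≤ pnorm 1 g * M ^ m := by
  rw [eval_eq', pnorm_one, sum_mul]
  refine (abs_sum_le_sum_abs _ _).trans (sum_le_sum fun d hd => ?_)
  rw [abs_mul, abs_prod]
  gcongr
  simp_rw [abs_pow, ← hg.sum_apply_eq hd]
  exact Finset.prod_pow_le_pow_sum _ _ (fun i _ => abs_nonneg _) fun i _ => hw i

theorem norm_orbitEval_le {g : MvPolynomial (Idx N) ℝ} {m : ℕ} (hg : g.IsHomogeneous m)
    (z : Idx N → ℝ) : ‖orbitEval g z‖ ≤ pnorm 1 g * ‖z‖ ^ m :=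
  (pi_norm_le_iff_of_nonneg (mul_nonneg (pnorm_one_nonneg g) (by positivity))).2 fun t =>
    abs_eval_le_pnorm_one_mul_pow hg fun i => norm_le_pi_norm z (shift t i)

theorem enorm_eq_norm_toLp (z : Idx N → ℝ) : _root_.enorm z = ‖WithLp.toLp 2 z‖ := by
  simp [_root_.enorm, EuclideanSpace.norm_eq]

theorem norm_toLp_orbit_prod_pow_le {d : Idx N →₀ ℕ} {r : ℕ} (hd : ∑ i, d i = r) (hr : r ≠ 0)
    (z : Idx N → ℝ) :
    ‖WithLp.toLp 2 fun t : Fin N => ∏ i, (z ∘ shift t) i ^ d i‖ ≤ _root_.enorm z ^ r := by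
  obtain ⟨k, hk⟩ : ∃ k, d k ≠ 0 := by
    by_contra! h
    simp [h] at hd
    exact hr hd.symm
  rw [enorm_eq_norm_toLp]
  set E := ‖WithLp.toLp 2 z‖
  have hE (i : Idx N) : |z i| ≤ E := PiLp.norm_apply_le (WithLp.toLp 2 z) i
  have hterm (t : Fin N) : |∏ i, (z ∘ shift t) i ^ d i| ≤ |z (shift t k)| * E ^ (r - 1) := by
    simp_rw [abs_prod, abs_pow, ← hd]
    exact prod_pow_le_mul_pow_pred d (fun _ => abs_nonneg _) (fun i => hE _) hk
  have horbit : ∑ t : Fin N, z (shift t k) ^ 2 ≤ E ^ 2 :=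
    calc ∑ t : Fin N, z (shift t k) ^ 2
        = ∑ l ∈ univ.map ⟨_, injective_shift_apply k⟩, z l ^ 2 := by rw [sum_map]; rfl
      _ ≤ ∑ l, z l ^ 2 := sum_le_univ_sum_of_nonneg fun _ => sq_nonneg _
      _ = E ^ 2 := by rw [EuclideanSpace.real_norm_sq_eq]
  rw [← pow_le_pow_iff_left₀ (norm_nonneg _) (by positivity) two_ne_zero,
    EuclideanSpace.real_norm_sq_eq]
  calc ∑ t : Fin N, (∏ i, (z ∘ shift t) i ^ d i) ^ 2
      ≤ ∑ t : Fin N, (|z (shift t k)| * E ^ (r - 1)) ^ 2 :=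
        sum_le_sum fun t _ => sq_le_sq.2 ((hterm t).trans_eq (abs_of_nonneg (by positivity)).symm)
    _ = (∑ t : Fin N, z (shift t k) ^ 2) * (E ^ (r - 1)) ^ 2 := by
        simp_rw [mul_pow, sq_abs, sum_mul]
    _ ≤ E ^ 2 * (E ^ (r - 1)) ^ 2 := by gcongr
    _ = (E ^ r) ^ 2 := by
        rw [← mul_pow, ← pow_succ', Nat.sub_add_cancel (Nat.one_le_iff_ne_zero.2 hr)]

theorem norm_toLp_orbitEval_le {g : MvPolynomial (Idx N) ℝ} {r : ℕ} (hg : g.IsHomogeneous r)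
    (hr : r ≠ 0) (z : Idx N → ℝ) :
    ‖WithLp.toLp 2 (orbitEval g z)‖ ≤ pnorm 1 g * _root_.enorm z ^ r := by
  have hsum : WithLp.toLp 2 (orbitEval g z) =
      ∑ d ∈ g.support, g.coeff d • WithLp.toLp 2 fun t : Fin N => ∏ i, (z ∘ shift t) i ^ d i := by
    ext t
    simp [orbitEval, eval_eq', WithLp.ofLp_sum]
  rw [hsum, pnorm_one, sum_mul]
  refine (norm_sum_le _ _).trans (sum_le_sum fun d hd => ?_)
  rw [norm_smul, Real.norm_eq_abs]
  gcongr
  exact norm_toLp_orbit_prod_pow_le (hg.sum_apply_eq hd) hr z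

theorem norm_sumElim_le {ι κ E : Type*} [Fintype ι] [Fintype κ] [SeminormedAddCommGroup E]
    (u : ι → E) (v : κ → E) : ‖Sum.elim u v‖ ≤ ‖u‖ + ‖v‖ := by
  refine (pi_norm_le_iff_of_nonneg (by positivity)).2 ?_
  rintro (i | i)
  · exact (norm_le_pi_norm u i).trans (le_add_of_nonneg_right (norm_nonneg v))
  · exact (norm_le_pi_norm v i).trans (le_add_of_nonneg_left (norm_nonneg u))

theorem enorm_sumElim_le (u v : Fin N → ℝ) :
    _root_.enorm (Sum.elim u v) ≤ ‖WithLp.toLp 2 u‖ + ‖WithLp.toLp 2 v‖ := by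
  have hu := EuclideanSpace.real_norm_sq_eq (WithLp.toLp 2 u)
  have hv := EuclideanSpace.real_norm_sq_eq (WithLp.toLp 2 v)
  simp only at hu hv
  rw [_root_.enorm, Real.sqrt_le_left (by positivity), Fintype.sum_sum_type]
  simp only [Sum.elim_inl, Sum.elim_inr, ← hu, ← hv]
  nlinarith [norm_nonneg (WithLp.toLp 2 u), norm_nonneg (WithLp.toLp 2 v)]

/-- For `f` homogeneous of degree `r+1` (`r ≥ 1`) and `F = f^⊕`,
the operator norm of the Hamiltonian vector field satisfies `‖X_F‖_op ≤ |X_F|_1`,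
i.e. `‖X_F(z)‖ ≤ |X_F|_1 ‖z‖^r` for all `z ≠ 0`, both for the supremum (`ℓ^∞`)
norm and for the euclidean (`ℓ²`) norm on `ℝ^{2N}`. -/
theorem opnorm_hamiltonian_field_le (N : ℕ) [NeZero N]
    (r : ℕ) (hr : 1 ≤ r)
    (f : MvPolynomial (Idx N) ℝ) (hf : f.IsHomogeneous (r + 1)) :
    (∀ z : Idx N → ℝ, z ≠ 0 →
        ‖Xvec N (oplus N f) z‖ ≤ hamNorm N 1 (oplus N f) * ‖z‖ ^ r) ∧
    (∀ z : Idx N → ℝ, z ≠ 0 →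
        _root_.enorm (Xvec N (oplus N f) z) ≤ hamNorm N 1 (oplus N f) * _root_.enorm z ^ r) := by
  set F := oplus N f
  have hF : F.IsHomogeneous (r + 1) := hf.oplus
  have hg : (pderiv (.inr 0) F).IsHomogeneous r := hF.pderiv
  have hh : (-pderiv (.inl 0) F).IsHomogeneous r := hF.pderiv.neg
  have hX := Xvec_eq_sumElim_orbitEval (rename_shift_oplus f)
  refine ⟨fun z _ => ?_, fun z _ => ?_⟩
  · rw [hX, hamNorm, add_mul]
    exact (norm_sumElim_le _ _).trans
      (add_le_add (norm_orbitEval_le hg z) (norm_orbitEval_le hh z))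
  · rw [hX, hamNorm, add_mul]
    have hr0 : r ≠ 0 := Nat.one_le_iff_ne_zero.1 hr
    exact (enorm_sumElim_le _ _).trans
      (add_le_add (norm_toLp_orbitEval_le hg hr0 z) (norm_toLp_orbitEval_le hh hr0 z))
end

section
/- Let F be a cyclically symmetric homogeneous polynomial of degree r on ℝ^N × ℝ^N whose seed f is of class D(C_f, σ). Then for every R > 0 one has |X_F|_R ≤ 4 r R^{r−1} C_f / (1 − e^{−σ})². -/
open MvPolynomial Finset Real

/-- `p` involves only the sites `0,…,m` (it is left aligned with interaction distance `≤ m`). -/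
def SuppIn (N : ℕ) (m : ℕ) (p : MvPolynomial (Idx N) ℝ) : Prop :=
  ∀ d ∈ p.support, ∀ j : Fin N, (d (Sum.inl j) ≠ 0 ∨ d (Sum.inr j) ≠ 0) → (j : ℕ) ≤ m

/-- the seed `f` is of class `D(C,σ)`: it decomposes as `f = ∑_{m≥0} f^(m)` with each `f^(m)`
left aligned, containing only monomials of interaction distance `≤ m`, and
`‖f^(m)‖₁ ≤ C e^{−σ m}`. -/
def ClassD (N : ℕ) (Cf σ : ℝ) (f : MvPolynomial (Idx N) ℝ) : Prop :=
  ∃ (M : ℕ) (comp : ℕ → MvPolynomial (Idx N) ℝ),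
    f = ∑ m ∈ Finset.range M, comp m ∧
    (∀ m, M ≤ m → comp m = 0) ∧
    (∀ m, SuppIn N m (comp m)) ∧
    (∀ m, pnorm 1 (comp m) ≤ Cf * Real.exp (-σ * m))

/-! The cyclic shift only renames variables, so it preserves `‖·‖_R`, and the partial derivative
of `f^⊕` in `x_0` (or `y_0`) is bounded by the sum of the `R`-norms of the partial derivatives of
the seed in all `x_j` (or `y_j`). For a homogeneous polynomial `p` of degree `r`, differentiation
multiplies each coefficient by an exponent `≤ r` and lowers the degree by one, so
`‖∂_i p‖_R ≤ r R^{r-1} ‖p‖_1`; replacing each `f^(m)` by its homogeneous part of degree `r`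
keeps the decomposition and the bounds. A component `f^(m)` involves only the `2(m+1)` variables
at the sites `0, …, m`, hence contributes at most `2(m+1) r R^{r-1} C e^{-σm}`, and
`∑ (m+1) e^{-σm} ≤ (1 - e^{-σ})⁻²`. -/

section PolynomialNorm

variable {N : ℕ} {R : ℝ}

lemma pnorm_eq_sum_degree (p : MvPolynomial (Idx N) ℝ) :
    pnorm R p = ∑ d ∈ p.support, |p.coeff d| * R ^ d.degree :=
  rfl

lemma pnorm_nonneg (hR : 0 ≤ R) (p : MvPolynomial (Idx N) ℝ) : 0 ≤ pnorm R p :=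
  sum_nonneg fun _ _ => by positivity

@[simp]
lemma pnorm_zero : pnorm R (0 : MvPolynomial (Idx N) ℝ) = 0 := by
  simp [pnorm]

lemma pnorm_neg (p : MvPolynomial (Idx N) ℝ) : pnorm R (-p) = pnorm R p := by
  simp [pnorm, support_neg]

lemma pnorm_eq_sum_of_support_subset {p : MvPolynomial (Idx N) ℝ} {s : Finset (Idx N →₀ ℕ)}
    (h : p.support ⊆ s) : pnorm R p = ∑ d ∈ s, |p.coeff d| * R ^ d.degree :=
  sum_subset h fun d _ hd => by simp [notMem_support_iff.mp hd]

lemma pnorm_add_le (hR : 0 ≤ R) (p q : MvPolynomial (Idx N) ℝ) :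
    pnorm R (p + q) ≤ pnorm R p + pnorm R q := by
  classical
  rw [pnorm_eq_sum_of_support_subset support_add,
    pnorm_eq_sum_of_support_subset (p := p) subset_union_left,
    pnorm_eq_sum_of_support_subset (p := q) subset_union_right, ← sum_add_distrib]
  gcongr with d
  rw [coeff_add, ← add_mul]
  gcongr
  exact abs_add_le _ _

lemma pnorm_sum_le (hR : 0 ≤ R) {ι : Type*} (s : Finset ι) (p : ι → MvPolynomial (Idx N) ℝ) :
    pnorm R (∑ i ∈ s, p i) ≤ ∑ i ∈ s, pnorm R (p i) :=
  Finset.le_sum_of_subadditive (pnorm R) pnorm_zero.le (pnorm_add_le hR) s p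

lemma pnorm_rename {φ : Idx N → Idx N} (hφ : Function.Injective φ) (p : MvPolynomial (Idx N) ℝ) :
    pnorm R (rename φ p) = pnorm R p := by
  classical
  rw [pnorm_eq_sum_degree, pnorm_eq_sum_degree, support_rename_of_injective hφ,
    sum_image fun _ _ _ _ h => Finsupp.mapDomain_injective hφ h]
  simp only [coeff_rename_mapDomain φ hφ, Finsupp.degree_mapDomain]

lemma pnorm_monomial_le (d : Idx N →₀ ℕ) (a : ℝ) :
    pnorm R (monomial d a) ≤ |a| * R ^ d.degree := by
  classical
  rcases eq_or_ne a 0 with rfl | ha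
  · simp
  · rw [pnorm_eq_sum_degree, support_monomial, if_neg ha, sum_singleton, coeff_monomial, if_pos rfl]

lemma pnorm_homogeneousComponent_le (hR : 0 ≤ R) (n : ℕ) (p : MvPolynomial (Idx N) ℝ) :
    pnorm R (homogeneousComponent n p) ≤ pnorm R p := by
  rw [pnorm_eq_sum_degree, pnorm_eq_sum_degree, support_homogeneousComponent]
  refine sum_le_sum_of_subset_of_nonneg (filter_subset _ _) (fun _ _ _ => by positivity)
    |>.trans_eq' (sum_congr rfl fun d hd => ?_)
  rw [coeff_homogeneousComponent, if_pos (mem_filter.mp hd).2]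

end PolynomialNorm

section Derivative

variable {N : ℕ} {R : ℝ}

lemma pnorm_pderiv_monomial_le (hR : 0 ≤ R) {r : ℕ} {d : Idx N →₀ ℕ} (hd : d.degree = r)
    (i : Idx N) (a : ℝ) :
    pnorm R (pderiv i (monomial d a)) ≤ r * R ^ (r - 1) * |a| := by
  rw [pderiv_monomial]
  refine (pnorm_monomial_le _ _).trans ?_
  rcases Nat.eq_zero_or_pos (d i) with hi | hi
  · simp only [hi, Nat.cast_zero, mul_zero, abs_zero, zero_mul]
    positivity
  have hdeg : (d - Finsupp.single i 1).degree = r - 1 := by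
    have hle : Finsupp.single i 1 ≤ d := Finsupp.single_le_iff.mpr hi
    have h := congrArg Finsupp.degree (tsub_add_cancel_of_le hle)
    rw [map_add, Finsupp.degree_single] at h
    omega
  have hir : (d i : ℝ) ≤ r := by exact_mod_cast hd ▸ Finsupp.le_degree i d
  rw [hdeg, abs_mul, Nat.abs_cast]
  calc |a| * d i * R ^ (r - 1) ≤ |a| * r * R ^ (r - 1) := by gcongr
    _ = r * R ^ (r - 1) * |a| := by ring

lemma pnorm_pderiv_le (hR : 0 ≤ R) {r : ℕ} {p : MvPolynomial (Idx N) ℝ} (hp : p.IsHomogeneous r)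
    (i : Idx N) : pnorm R (pderiv i p) ≤ r * R ^ (r - 1) * pnorm 1 p := by
  conv_lhs => rw [p.as_sum, map_sum]
  refine (pnorm_sum_le hR _ _).trans ?_
  simp only [pnorm_eq_sum_degree, one_pow, mul_one, mul_sum]
  gcongr with d hd
  refine pnorm_pderiv_monomial_le hR ?_ i _
  rw [Finsupp.degree_eq_weight_one]
  exact hp (mem_support_iff.mp hd)

lemma SuppIn.pderiv_eq_zero {m : ℕ} {p : MvPolynomial (Idx N) ℝ} (hp : SuppIn N m p)
    {i : Idx N} (hi : m < (i.elim id id : Fin N)) : pderiv i p = 0 := by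
  refine pderiv_eq_zero_of_notMem_vars fun hmem => ?_
  obtain ⟨d, hd, hdi⟩ := (mem_vars_iff_mem_support i).mp hmem
  rcases i with j | j
  · exact hi.not_ge (hp d hd j (.inl (Finsupp.mem_support_iff.mp hdi)))
  · exact hi.not_ge (hp d hd j (.inr (Finsupp.mem_support_iff.mp hdi)))

lemma Fin.sum_le_succ_mul_of_eq_zero_of_lt {g : Fin N → ℝ} {m : ℕ} {B : ℝ} (hB : 0 ≤ B)
    (hg : ∀ j : Fin N, m < j → g j = 0) (hgB : ∀ j, g j ≤ B) : ∑ j, g j ≤ (m + 1) * B := by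
  classical
  have hcard : (univ.filter fun j : Fin N => (j : ℕ) ≤ m).card ≤ m + 1 := by
    simpa using card_le_card_of_injOn (t := range (m + 1)) Fin.val
      (fun j hj => by simpa [Nat.lt_succ_iff] using hj) Fin.val_injective.injOn
  rw [← sum_filter_of_ne fun j _ hj => not_lt.mp (mt (hg j) hj)]
  calc ∑ j ∈ univ.filter fun j : Fin N => (j : ℕ) ≤ m, g j
      ≤ (univ.filter fun j : Fin N => (j : ℕ) ≤ m).card * B :=
        (sum_le_card_nsmul _ _ _ fun j _ => hgB j).trans_eq (nsmul_eq_mul _ _)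
    _ ≤ (m + 1) * B := by gcongr; exact_mod_cast hcard

lemma sum_pnorm_pderiv_le_of_suppIn (hR : 0 ≤ R) {r m : ℕ} {p : MvPolynomial (Idx N) ℝ}
    (hp : p.IsHomogeneous r) (hm : SuppIn N m p) :
    ∑ i : Idx N, pnorm R (pderiv i p) ≤ 2 * (m + 1) * (r * R ^ (r - 1) * pnorm 1 p) := by
  have hB : 0 ≤ r * R ^ (r - 1) * pnorm 1 p := by
    have := pnorm_nonneg zero_le_one p
    positivity
  have hsite (v : Fin N → Idx N) (hv : ∀ j, (v j).elim id id = j) :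
      ∑ j, pnorm R (pderiv (v j) p) ≤ (m + 1) * (r * R ^ (r - 1) * pnorm 1 p) :=
    Fin.sum_le_succ_mul_of_eq_zero_of_lt hB
      (fun j hj => by rw [hm.pderiv_eq_zero (by rwa [hv]), pnorm_zero])
      (fun j => pnorm_pderiv_le hR hp (v j))
  rw [Fintype.sum_sum_type]
  linarith [hsite Sum.inl fun _ => rfl, hsite Sum.inr fun _ => rfl]

end Derivative

section CyclicShift

variable {N : ℕ} {R : ℝ}

def idxShift (c : Fin N) : Idx N → Idx N :=
  Sum.map (· + c) (· + c)

lemma idxShift_injective (c : Fin N) : Function.Injective (idxShift c) :=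
  (add_left_injective c).sumMap (add_left_injective c)

@[simp]
lemma idxShift_inl (c j : Fin N) : idxShift c (.inl j) = .inl (j + c) := rfl

@[simp]
lemma idxShift_inr (c j : Fin N) : idxShift c (.inr j) = .inr (j + c) := rfl

variable [NeZero N]

lemma idxShift_idxShift_neg (c : Fin N) (i : Idx N) : idxShift c (idxShift (-c) i) = i := by
  rcases i with j | j <;> simp

lemma pnorm_pderiv_rename_idxShift (c : Fin N) (i : Idx N) (f : MvPolynomial (Idx N) ℝ) :
    pnorm R (pderiv i (rename (idxShift c) f)) = pnorm R (pderiv (idxShift (-c) i) f) := by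
  conv_lhs => rw [← idxShift_idxShift_neg c i]
  rw [pderiv_rename (idxShift_injective c), pnorm_rename (idxShift_injective c)]

open Fin.CommRing in
lemma tauPow_eq_rename_idxShift (s : ℤ) (f : MvPolynomial (Idx N) ℝ) :
    tauPow N s f = rename (idxShift (s : Fin N)) f :=
  rfl

open Fin.CommRing in
lemma pnorm_pderiv_oplus_le (hR : 0 ≤ R) (i : Idx N) (f : MvPolynomial (Idx N) ℝ) :
    pnorm R (pderiv i (oplus N f)) ≤ ∑ c : Fin N, pnorm R (pderiv (idxShift c i) f) := by
  rw [oplus, map_sum]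
  refine (pnorm_sum_le hR _ _).trans_eq ?_
  simp only [tauPow_eq_rename_idxShift, pnorm_pderiv_rename_idxShift]
  rw [← Fin.sum_univ_eq_sum_range
    (fun l => pnorm R (pderiv (idxShift (-((l + 1 : ℤ) : Fin N)) i) f))]
  simpa using Equiv.sum_comp ((Equiv.addRight 1).trans (Equiv.neg (Fin N)))
    (fun c => pnorm R (pderiv (idxShift c i) f))

lemma hamNorm_oplus_le (hR : 0 ≤ R) (f : MvPolynomial (Idx N) ℝ) :
    hamNorm N R (oplus N f) ≤ ∑ i : Idx N, pnorm R (pderiv i f) := by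
  rw [hamNorm, pnorm_neg, Fintype.sum_sum_type, add_comm]
  gcongr
  · simpa using pnorm_pderiv_oplus_le hR (.inl 0) f
  · simpa using pnorm_pderiv_oplus_le hR (.inr 0) f

lemma hamNorm_oplus_sum_le (hR : 0 ≤ R) {ι : Type*} (s : Finset ι)
    (p : ι → MvPolynomial (Idx N) ℝ) :
    hamNorm N R (oplus N (∑ m ∈ s, p m)) ≤ ∑ m ∈ s, ∑ i : Idx N, pnorm R (pderiv i (p m)) := by
  refine (hamNorm_oplus_le hR _).trans ?_
  rw [sum_comm]
  gcongr with i
  rw [map_sum]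
  exact pnorm_sum_le hR _ _

end CyclicShift

section ClassD

variable {N r : ℕ} {C σ : ℝ} {f : MvPolynomial (Idx N) ℝ}

lemma ClassD.nonneg (hD : ClassD N C σ f) : 0 ≤ C := by
  obtain ⟨-, comp, -, -, -, hnorm⟩ := hD
  simpa using (pnorm_nonneg zero_le_one (comp 0)).trans (hnorm 0)

lemma ClassD.exists_isHomogeneous_decomposition (hD : ClassD N C σ f) (hf : f.IsHomogeneous r) :
    ∃ (M : ℕ) (p : ℕ → MvPolynomial (Idx N) ℝ), f = ∑ m ∈ range M, p m ∧
      (∀ m, (p m).IsHomogeneous r) ∧ (∀ m, SuppIn N m (p m)) ∧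
      ∀ m, pnorm 1 (p m) ≤ C * exp (-σ * m) := by
  obtain ⟨M, comp, hsum, -, hsupp, hnorm⟩ := hD
  refine ⟨M, fun m => homogeneousComponent r (comp m), ?_,
    fun m => homogeneousComponent_isHomogeneous r _, fun m d hd => hsupp m d ?_,
    fun m => (pnorm_homogeneousComponent_le zero_le_one r _).trans (hnorm m)⟩
  · rw [← map_sum, ← hsum, homogeneousComponent_eq_self hf]
  · rw [support_homogeneousComponent] at hd
    exact (mem_filter.mp hd).1

end ClassD

lemma sum_range_succ_mul_pow_le {x : ℝ} (hx0 : 0 ≤ x) (hx1 : x < 1) (M : ℕ) :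
    ∑ m ∈ range M, (m + 1 : ℝ) * x ^ m ≤ 1 / (1 - x) ^ 2 := by
  have h : HasSum (fun n : ℕ => (n + 1 : ℝ) * x ^ n) (1 / (1 - x) ^ 2) := by
    simpa [Nat.choose_one_right] using
      hasSum_choose_mul_geometric_of_norm_lt_one 1 (r := x) (by rwa [norm_of_nonneg hx0])
  exact sum_le_hasSum _ (fun n _ => by positivity) h

theorem hamNorm_of_classD_general (N : ℕ) [NeZero N]
    (r : ℕ) (f : MvPolynomial (Idx N) ℝ) (hf : f.IsHomogeneous r)
    (Cf σ : ℝ) (hσ : 0 < σ) (hD : ClassD N Cf σ f)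
    (R : ℝ) (hR : 0 < R) :
    hamNorm N R (oplus N f) ≤ 4 * r * R ^ (r - 1) * Cf / (1 - Real.exp (-σ)) ^ 2 := by
  have hC := hD.nonneg
  obtain ⟨M, p, rfl, hhom, hsupp, hnorm⟩ := hD.exists_isHomogeneous_decomposition hf
  have hx1 : exp (-σ) < 1 := exp_lt_one_iff.mpr (neg_lt_zero.mpr hσ)
  calc hamNorm N R (oplus N (∑ m ∈ range M, p m))
      ≤ ∑ m ∈ range M, 2 * (m + 1) * (r * R ^ (r - 1) * pnorm 1 (p m)) :=
        (hamNorm_oplus_sum_le hR.le _ _).trans <|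
          sum_le_sum fun m _ => sum_pnorm_pderiv_le_of_suppIn hR.le (hhom m) (hsupp m)
    _ ≤ ∑ m ∈ range M, 2 * (m + 1) * (r * R ^ (r - 1) * (Cf * exp (-σ) ^ m)) := by
        gcongr with m
        rw [← exp_nat_mul, mul_comm (m : ℝ)]
        exact hnorm m
    _ = 2 * r * R ^ (r - 1) * Cf * ∑ m ∈ range M, (m + 1) * exp (-σ) ^ m := by
        rw [mul_sum]
        exact sum_congr rfl fun m _ => by ring
    _ ≤ 2 * r * R ^ (r - 1) * Cf * (1 / (1 - exp (-σ)) ^ 2) := by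
        gcongr
        exact sum_range_succ_mul_pow_le (exp_pos _).le hx1 M
    _ ≤ 4 * r * R ^ (r - 1) * Cf / (1 - exp (-σ)) ^ 2 := by
        rw [mul_one_div]
        gcongr
        norm_num

/-- If `F = f^⊕` is a cyclically symmetric homogeneous polynomial of
degree `r` whose seed `f` is of class `D(C_f, σ)`, then for every `R > 0`
`|X_F|_R ≤ 4 r R^{r−1} C_f / (1 − e^{−σ})²`. -/
theorem hamNorm_of_classD (N : ℕ) [NeZero N]
    (r : ℕ) (f : MvPolynomial (Idx N) ℝ) (hf : f.IsHomogeneous r)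
    (Cf σ : ℝ) (hCf : 0 < Cf) (hσ : 0 < σ) (hD : ClassD N Cf σ f)
    (R : ℝ) (hR : 0 < R) :
    hamNorm N R (oplus N f) ≤ 4 * r * R ^ (r - 1) * Cf / (1 - Real.exp (-σ)) ^ 2 :=
  hamNorm_of_classD_general N r f hf Cf σ hσ hD R hR
end
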